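/- Let $E_1(\mu) = \frac{1}{2}\iint \Lambda(x,y)\, d\mu(x) d\mu(y)$ and $E_\alpha(\mu) = \frac{1}{2}\iint \Lambda(x,y)^\alpha\, d\mu(x) d\mu(y)$ with $\Lambda(x,y) = \frac{2}{\pi}\min\{\arccos(x\cdot y), \pi - \arccos(x\cdot y)\}$. Fix $\alpha > 1$ and $N \in \mathbb{N}$. Suppose $\mu = \frac{1}{N}\sum_{i=1}^N \delta_{x_i}$ maximizes $E_1$ among uniform $N$-point measures on $S^d$ and all $x_i \cdot x_j \in \{0, 1, -1\}$. If $\nu = \frac{1}{N}\sum_{i=1}^N \delta_{y_i}$ maximizes $E_\alpha$ among uniform $N$-point measures, then $y_i \cdot y_j \in \{0, 1, -1\}$ for all $i, j$. -/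

import Mathlib

open scoped RealInnerProductSpace

/-- The `α`-energy of the uniform measure on the `N` points `x 0, ..., x (N-1)` of the
sphere, with kernel the `α`-th power of the renormalized angle `Λ`. -/
noncomputable def energy (d N : ℕ) (α : ℝ)
    (x : Fin N → EuclideanSpace ℝ (Fin (d + 1))) : ℝ :=
  1 / (2 * (N : ℝ) ^ 2) * ∑ i, ∑ j,
    (2 / Real.pi * min (Real.arccos ⟪x i, x j⟫) (Real.pi - Real.arccos ⟪x i, x j⟫)) ^ α

/-! Since `Λ` takes values in `[0, 1]` and `α > 1`, `Λ ^ α ≤ Λ` with equality exactly when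
`Λ ∈ {0, 1}`, i.e. when the inner product is `0` or `±1`. So `E_α ≤ E_1` everywhere, with equality
precisely on such configurations, and `E_1 y ≤ E_1 x = E_α x ≤ E_α y ≤ E_1 y` forces equality
for `y`. -/

open Real

lemma rpow_eq_self_iff_of_mem_Icc {u α : ℝ} (hu : u ∈ Set.Icc 0 1) (hα : 1 < α) :
    u ^ α = u ↔ u ∈ ({0, 1} : Set ℝ) := by
  obtain ⟨hu₀, hu₁⟩ := hu
  constructor
  · intro h
    by_contra hne
    simp only [Set.mem_insert_iff, Set.mem_singleton_iff, not_or] at hne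
    exact (rpow_lt_self_of_lt_one (hu₀.lt_of_ne' hne.1) (hu₁.lt_of_ne hne.2) hα).ne h
  · rintro (rfl | rfl)
    · exact zero_rpow (by linarith)
    · exact one_rpow α

noncomputable def angleKernel (t : ℝ) : ℝ :=
  2 / π * min (arccos t) (π - arccos t)

lemma angleKernel_mem_Icc (t : ℝ) : angleKernel t ∈ Set.Icc 0 1 := by
  have h₀ := arccos_nonneg t
  have hπ := arccos_le_pi t
  constructor
  · exact mul_nonneg (by positivity) (le_min h₀ (by linarith))
  · rw [angleKernel, div_mul_eq_mul_div, div_le_one pi_pos]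
    linarith [min_le_left (arccos t) (π - arccos t), min_le_right (arccos t) (π - arccos t)]

lemma angleKernel_eq_zero_iff {t : ℝ} : angleKernel t = 0 ↔ arccos t = 0 ∨ arccos t = π := by
  rw [angleKernel, mul_eq_zero, or_iff_right (by positivity)]
  constructor
  · intro h
    rcases min_choice (arccos t) (π - arccos t) with h' | h' <;> rw [h'] at h
    exacts [Or.inl h, Or.inr (by linarith)]
  · rintro (h | h) <;> simp [h, pi_nonneg]

lemma angleKernel_eq_one_iff {t : ℝ} : angleKernel t = 1 ↔ arccos t = π / 2 := by
  rw [angleKernel, div_mul_eq_mul_div, div_eq_one_iff_eq pi_ne_zero]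
  constructor
  · intro h
    linarith [min_le_left (arccos t) (π - arccos t), min_le_right (arccos t) (π - arccos t)]
  · intro h
    rw [h, show π - π / 2 = π / 2 by ring, min_self]
    ring

lemma angleKernel_mem_zero_one_iff {t : ℝ} (ht : t ∈ Set.Icc (-1) 1) :
    angleKernel t ∈ ({0, 1} : Set ℝ) ↔ t ∈ ({0, 1, -1} : Set ℝ) := by
  obtain ⟨ht₁, ht₂⟩ := ht
  simp only [Set.mem_insert_iff, Set.mem_singleton_iff, angleKernel_eq_zero_iff,
    angleKernel_eq_one_iff, arccos_eq_zero, arccos_eq_pi, arccos_eq_pi_div_two,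
    LE.le.ge_iff_eq ht₂, LE.le.ge_iff_eq' ht₁]
  tauto

lemma energy_eq_sum_angleKernel (d N : ℕ) (α : ℝ) (z : Fin N → EuclideanSpace ℝ (Fin (d + 1))) :
    energy d N α z = 1 / (2 * (N : ℝ) ^ 2) * ∑ i, ∑ j, angleKernel ⟪z i, z j⟫ ^ α :=
  rfl

lemma angleKernel_rpow_le_self {α : ℝ} (hα : 1 ≤ α) (t : ℝ) :
    angleKernel t ^ α ≤ angleKernel t :=
  rpow_le_self_of_le_one (angleKernel_mem_Icc t).1 (angleKernel_mem_Icc t).2 hα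

lemma energy_le_energy_one {α : ℝ} (hα : 1 ≤ α) (d N : ℕ)
    (z : Fin N → EuclideanSpace ℝ (Fin (d + 1))) : energy d N α z ≤ energy d N 1 z := by
  simp only [energy_eq_sum_angleKernel, rpow_one]
  gcongr with i _ j _
  exact angleKernel_rpow_le_self hα _

lemma energy_eq_energy_one_iff {α : ℝ} (hα : 1 < α) (d N : ℕ)
    (z : Fin N → EuclideanSpace ℝ (Fin (d + 1))) :
    energy d N α z = energy d N 1 z ↔ ∀ i j, angleKernel ⟪z i, z j⟫ ∈ ({0, 1} : Set ℝ) := by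
  rcases N.eq_zero_or_pos with rfl | hN
  · simp [energy]
  have hle := fun i j => angleKernel_rpow_le_self hα.le ⟪z i, z j⟫
  simp only [energy_eq_sum_angleKernel, rpow_one,
    ← rpow_eq_self_iff_of_mem_Icc (angleKernel_mem_Icc _) hα]
  rw [mul_right_inj' (by positivity),
    Finset.sum_eq_sum_iff_of_le fun i _ => Finset.sum_le_sum fun j _ => hle i j]
  simp only [Finset.sum_eq_sum_iff_of_le fun j _ => hle _ j, Finset.mem_univ, true_implies]

theorem stmt16 (d N : ℕ) (α : ℝ) (hα : 1 < α)
    (x y : Fin N → EuclideanSpace ℝ (Fin (d + 1)))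
    (hx : ∀ i, ‖x i‖ = 1)
    (hxmax : ∀ z : Fin N → EuclideanSpace ℝ (Fin (d + 1)), (∀ i, ‖z i‖ = 1) →
      energy d N 1 z ≤ energy d N 1 x)
    (hxorth : ∀ i j, ⟪x i, x j⟫ ∈ ({0, 1, -1} : Set ℝ))
    (hy : ∀ i, ‖y i‖ = 1)
    (hymax : ∀ z : Fin N → EuclideanSpace ℝ (Fin (d + 1)), (∀ i, ‖z i‖ = 1) →
      energy d N α z ≤ energy d N α y) :
    ∀ i j, ⟪y i, y j⟫ ∈ ({0, 1, -1} : Set ℝ) := by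
  have hxα : energy d N α x = energy d N 1 x :=
    (energy_eq_energy_one_iff hα d N x).2 fun i j =>
      (angleKernel_mem_zero_one_iff (real_inner_mem_Icc_of_norm_eq_one (hx i) (hx j))).2
        (hxorth i j)
  have hyα : energy d N α y = energy d N 1 y :=
    le_antisymm (energy_le_energy_one hα.le d N y) <|
      calc energy d N 1 y ≤ energy d N 1 x := hxmax y hy
        _ = energy d N α x := hxα.symm
        _ ≤ energy d N α y := hymax x hx
  intro i j
  exact (angleKernel_mem_zero_one_iff (real_inner_mem_Icc_of_norm_eq_one (hy i) (hy j))).1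
    ((energy_eq_energy_one_iff hα d N y).1 hyα i j)
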